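/- arXiv:2209.03730 — 3 statements merged into one kernel-verified Lean document; each statement's English description precedes it below -/
import Mathlib

section
/- Let n ≥ m ≥ 1 be integers. For every binary vector v of length n with m(v) = m, one has P(v) ≥ 3^m − 2^m; moreover equality holds for the vector whose entries are 1 in positions 1,…,m and 0 in positions m+1,…,n. (Paper's Theorem 4.4.) -/
/-- The Collatz map `T`. -/
def collatzT (N : ℕ) : ℕ := if N % 2 = 0 then N / 2 else (3 * N + 1) / 2

/-- The parity vector of length `n` of `N`: entry `k` is `true` iff `T^[k] N` is odd. -/
def parityVec (N n : ℕ) : List Bool :=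
  (List.range n).map (fun k => decide ((collatzT^[k] N) % 2 = 1))

/-- `m(v)`: the number of ones of a binary vector. -/
def mOnes (v : List Bool) : ℕ := v.count true

/-- `P(v)`: the characteristic number of a binary vector,
`P(v) = Σ_{k=1}^{m} 3^(m-k) * 2^(j_k - 1)` where `j_1 < … < j_m` are the positions of ones. -/
def Pchar : List Bool → ℕ
  | [] => 0
  | e :: rest => (if e then 3 ^ mOnes rest else 0) + 2 * Pchar rest

/-! Prepending a digit `e` to `v` maps `P(v)` to `2 P(v) + [e] 3^{m(v)}`, so the quantity
`P(v) + 2^{m(v)} - 3^{m(v)}` at least doubles at each step and starts at `0`; it stays `0`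
exactly while only ones are prepended, and trailing zeros change neither `P` nor `m`. -/

@[simp]
lemma mOnes_nil : mOnes [] = 0 := rfl

@[simp]
lemma mOnes_cons_true (v : List Bool) : mOnes (true :: v) = mOnes v + 1 :=
  List.count_cons_self ..

@[simp]
lemma mOnes_cons_false (v : List Bool) : mOnes (false :: v) = mOnes v := by
  simp [mOnes]

@[simp]
lemma mOnes_append (u v : List Bool) : mOnes (u ++ v) = mOnes u + mOnes v :=
  List.count_append ..

@[simp]
lemma mOnes_replicate_true (k : ℕ) : mOnes (List.replicate k true) = k := by
  simp [mOnes]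

@[simp]
lemma mOnes_replicate_false (k : ℕ) : mOnes (List.replicate k false) = 0 := by
  simp [mOnes, List.count_replicate]

@[simp]
lemma Pchar_replicate_false (k : ℕ) : Pchar (List.replicate k false) = 0 := by
  induction k with
  | zero => rfl
  | succ k ih => simp [List.replicate_succ, Pchar, ih]

lemma Pchar_append (u v : List Bool) :
    Pchar (u ++ v) = 3 ^ mOnes v * Pchar u + 2 ^ u.length * Pchar v := by
  induction u with
  | nil => simp [Pchar]
  | cons e u ih =>
    simp only [List.cons_append, Pchar, ih, mOnes_append, List.length_cons]
    split_ifs <;> ring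

lemma Pchar_append_replicate_false (u : List Bool) (k : ℕ) :
    Pchar (u ++ List.replicate k false) = Pchar u := by
  simp [Pchar_append]

lemma three_pow_mOnes_le_Pchar_add_two_pow (v : List Bool) :
    3 ^ mOnes v ≤ Pchar v + 2 ^ mOnes v := by
  induction v with
  | nil => simp
  | cons e v ih =>
    cases e
    · have : 2 ^ mOnes v ≤ 3 ^ mOnes v := Nat.pow_le_pow_left (by norm_num) _
      simp only [Pchar, mOnes_cons_false, Bool.false_eq_true, if_false]
      omega
    · simp only [Pchar, mOnes_cons_true, pow_succ, if_true]
      omega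

lemma Pchar_replicate_true_add_two_pow (m : ℕ) :
    Pchar (List.replicate m true) + 2 ^ m = 3 ^ m := by
  induction m with
  | zero => rfl
  | succ m ih =>
    simp only [List.replicate_succ, Pchar, if_true, mOnes_replicate_true, pow_succ]
    omega

theorem stmt_6_general (n m : ℕ) :
    (∀ v : List Bool, v.length = n → mOnes v = m →
      3 ^ m - 2 ^ m ≤ Pchar v) ∧
    Pchar (List.replicate m true ++ List.replicate (n - m) false) =
      3 ^ m - 2 ^ m := by
  refine ⟨fun v _ hv => ?_, ?_⟩
  · have := three_pow_mOnes_le_Pchar_add_two_pow v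
    rw [hv] at this
    omega
  · have := Pchar_replicate_true_add_two_pow m
    rw [Pchar_append_replicate_false]
    omega

/-- Paper's Theorem 4.4: for v of length n with m(v) = m (n ≥ m ≥ 1),
`P v ≥ 3^m - 2^m`, with equality for the vector
`(1,…,1,0,…,0)` (m ones then n-m zeros). -/
theorem stmt_6 (n m : ℕ) (hm : 1 ≤ m) (hmn : m ≤ n) :
    (∀ v : List Bool, v.length = n → mOnes v = m →
      3 ^ m - 2 ^ m ≤ Pchar v) ∧
    Pchar (List.replicate m true ++ List.replicate (n - m) false) =
      3 ^ m - 2 ^ m :=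
  stmt_6_general n m
end

section
/- Let v be a binary vector of length n whose entries equal to 1 occur exactly at the positions j_1 < j_2 < … < j_m, with m ≥ 1. Suppose that for each k ∈ {1,…,m} there are positive integers z_k and t_k satisfying 3^k·z_k + 2^{j_k − 1} = 2^n·t_k. Then the positive integer X* = Σ_{k=1}^{m} z_k has parity vector of length n equal to v, and T^n(X*) = Σ_{k=1}^{m} 3^{m−k}·t_k. (Paper's Theorem 4.9.) -/
/-! Reading `3^m(v) X + P(v) = 2^|v| Y` modulo 2 forces the parity of `X` to be the first entry
of `v`, and halving leaves the same equation for `T X` and the tail of `v`; hence such an `X`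
has parity vector `v` and `T^|v| X = Y`. Multiplying the `k`-th hypothesis by `3^(m-1-k)` and
summing gives this equation for `X = Σ z_k`, `Y = Σ 3^(m-1-k) t_k`, because
`P(v) = Σ 2^(j_k - 1) 3^(m-1-k)`. -/

lemma parityVec_succ (N n : ℕ) :
    parityVec N (n + 1) = decide (N % 2 = 1) :: parityVec (collatzT N) n := by
  simp only [parityVec, List.range_succ_eq_map, List.map_cons, List.map_map]
  rfl

lemma collatzT_two_mul (N : ℕ) : collatzT (2 * N) = N := by
  simp [collatzT]

lemma collatzT_two_mul_add_one (N : ℕ) : collatzT (2 * N + 1) = 3 * N + 2 := by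
  simp [collatzT]
  omega

lemma mOnes_cons (e : Bool) (v : List Bool) :
    mOnes (e :: v) = mOnes v + if e then 1 else 0 := by
  cases e <;> simp [mOnes]

lemma parity_and_collatzT_of_three_pow_mul_add_Pchar_cons {e : Bool} {v : List Bool} {X Y : ℕ}
    (h : 3 ^ mOnes (e :: v) * X + Pchar (e :: v) = 2 ^ (v.length + 1) * Y) :
    decide (X % 2 = 1) = e ∧ 3 ^ mOnes v * collatzT X + Pchar v = 2 ^ v.length * Y := by
  have hodd : 3 ^ mOnes v % 2 = 1 := by simp [Nat.pow_mod]
  obtain ⟨X, rfl | rfl⟩ := Nat.even_or_odd' X <;> cases e <;>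
    simp only [mOnes_cons, Pchar, Bool.false_eq_true, if_false, if_true, add_zero, zero_add,
      pow_succ, collatzT_two_mul, collatzT_two_mul_add_one] at h ⊢
  · exact ⟨by simp, by linarith⟩
  · exact absurd (congrArg (· % 2) h) (by simp [Nat.add_mod, Nat.mul_mod, hodd])
  · exact absurd (congrArg (· % 2) h) (by simp [Nat.add_mod, Nat.mul_mod, hodd])
  · exact ⟨by simp, by linarith⟩

theorem parityVec_eq_and_iterate_eq_of_three_pow_mul_add_Pchar {v : List Bool} {X Y : ℕ}
    (h : 3 ^ mOnes v * X + Pchar v = 2 ^ v.length * Y) :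
    parityVec X v.length = v ∧ collatzT^[v.length] X = Y := by
  induction v generalizing X with
  | nil => simp_all [mOnes, Pchar, parityVec]
  | cons e v ih =>
    obtain ⟨hparity, hstep⟩ := parity_and_collatzT_of_three_pow_mul_add_Pchar_cons h
    obtain ⟨hvec, hiter⟩ := ih hstep
    exact ⟨by rw [List.length_cons, parityVec_succ, hparity, hvec], hiter⟩

lemma mOnes_drop_eq_sum (v : List Bool) (d : ℕ) :
    mOnes (v.drop d) = ∑ i ∈ Finset.range v.length,
      if v.getD i false = true then (if d ≤ i then 1 else 0) else 0 := by
  induction v generalizing d with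
  | nil => simp [mOnes]
  | cons e v ih =>
    rw [List.length_cons, Finset.sum_range_succ']
    cases d with
    | zero => simpa [mOnes_cons] using ih 0
    | succ d => simpa using ih d

lemma Pchar_eq_sum (v : List Bool) :
    Pchar v = ∑ i ∈ Finset.range v.length,
      if v.getD i false = true then 2 ^ i * 3 ^ mOnes (v.drop (i + 1)) else 0 := by
  induction v with
  | nil => simp [Pchar]
  | cons e v ih =>
    rw [List.length_cons, Finset.sum_range_succ', Pchar, ih, Finset.mul_sum, add_comm]
    congr 1
    · refine Finset.sum_congr rfl fun i _ => ?_
      simp only [List.getD_cons_succ, List.drop_succ_cons]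
      split_ifs <;> ring
    · cases e <;> simp

section Positions

variable {m : ℕ} {v : List Bool} {j : Fin m → ℕ}

lemma sum_range_getD_eq_sum_positions {M : Type*} [AddCommMonoid M] (hinj : Function.Injective j)
    (hj1 : ∀ k, 1 ≤ j k) (hjn : ∀ k, j k ≤ v.length)
    (hones : ∀ i < v.length, (v.getD i false = true ↔ ∃ k, j k = i + 1)) (f : ℕ → M) :
    ∑ i ∈ Finset.range v.length, (if v.getD i false = true then f i else 0) =
      ∑ k, f (j k - 1) := by
  rw [← Finset.sum_filter]
  refine (Finset.sum_bij (fun k _ => j k - 1) (fun k _ => ?_) (fun a _ b _ hab => ?_)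
    (fun i hi => ?_) (fun _ _ => rfl)).symm
  · have := hj1 k
    have := hjn k
    simpa using ⟨by omega, (hones _ (by omega)).2 ⟨k, by omega⟩⟩
  · have := hj1 a
    have := hj1 b
    exact hinj (by omega)
  · rw [Finset.mem_filter, Finset.mem_range] at hi
    obtain ⟨k, hk⟩ := (hones i hi.1).1 hi.2
    exact ⟨k, Finset.mem_univ k, by omega⟩

lemma mOnes_eq_card_positions (hinj : Function.Injective j) (hj1 : ∀ k, 1 ≤ j k)
    (hjn : ∀ k, j k ≤ v.length)
    (hones : ∀ i < v.length, (v.getD i false = true ↔ ∃ k, j k = i + 1)) : mOnes v = m := by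
  simpa using (mOnes_drop_eq_sum v 0).trans
    (sum_range_getD_eq_sum_positions hinj hj1 hjn hones fun i => if 0 ≤ i then 1 else 0)

lemma mOnes_drop_positions (hmono : StrictMono j) (hj1 : ∀ k, 1 ≤ j k)
    (hjn : ∀ k, j k ≤ v.length)
    (hones : ∀ i < v.length, (v.getD i false = true ↔ ∃ k, j k = i + 1)) (k : Fin m) :
    mOnes (v.drop (j k)) = m - 1 - k := by
  rw [mOnes_drop_eq_sum, sum_range_getD_eq_sum_positions hmono.injective hj1 hjn hones]
  have hlt (k' : Fin m) : j k ≤ j k' - 1 ↔ k < k' := by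
    have := hj1 k'
    rw [← hmono.lt_iff_lt]
    omega
  simp only [hlt, Finset.sum_boole, Nat.cast_id]
  rw [Finset.filter_lt_eq_Ioi, Fin.card_Ioi]

lemma Pchar_eq_sum_positions (hmono : StrictMono j) (hj1 : ∀ k, 1 ≤ j k)
    (hjn : ∀ k, j k ≤ v.length)
    (hones : ∀ i < v.length, (v.getD i false = true ↔ ∃ k, j k = i + 1)) :
    Pchar v = ∑ k, 2 ^ (j k - 1) * 3 ^ (m - 1 - k) := by
  rw [Pchar_eq_sum, sum_range_getD_eq_sum_positions hmono.injective hj1 hjn hones]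
  refine Finset.sum_congr rfl fun k _ => ?_
  rw [Nat.sub_add_cancel (hj1 k), mOnes_drop_positions hmono hj1 hjn hones]

end Positions

theorem stmt_12_general (n m : ℕ) (v : List Bool) (hv : v.length = n)
    (j : Fin m → ℕ) (hmono : StrictMono j)
    (hj1 : ∀ k, 1 ≤ j k) (hjn : ∀ k, j k ≤ n)
    (hones : ∀ i : ℕ, i < n → (v.getD i false = true ↔ ∃ k, j k = i + 1))
    (z t : Fin m → ℕ)
    (heq : ∀ k : Fin m, 3 ^ ((k : ℕ) + 1) * z k + 2 ^ (j k - 1) = 2 ^ n * t k) :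
    parityVec (∑ k, z k) n = v ∧
      collatzT^[n] (∑ k, z k) = ∑ k : Fin m, 3 ^ (m - 1 - (k : ℕ)) * t k := by
  subst hv
  apply parityVec_eq_and_iterate_eq_of_three_pow_mul_add_Pchar
  rw [mOnes_eq_card_positions hmono.injective hj1 hjn hones,
    Pchar_eq_sum_positions hmono hj1 hjn hones, Finset.mul_sum, Finset.mul_sum,
    ← Finset.sum_add_distrib]
  refine Finset.sum_congr rfl fun k _ => ?_
  have hpow : 3 ^ m = 3 ^ (m - 1 - (k : ℕ)) * 3 ^ ((k : ℕ) + 1) := by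
    rw [← pow_add]
    congr 1
    omega
  calc 3 ^ m * z k + 2 ^ (j k - 1) * 3 ^ (m - 1 - (k : ℕ))
      = 3 ^ (m - 1 - (k : ℕ)) * (3 ^ ((k : ℕ) + 1) * z k + 2 ^ (j k - 1)) := by rw [hpow]; ring
    _ = 2 ^ v.length * (3 ^ (m - 1 - (k : ℕ)) * t k) := by rw [heq k]; ring

/-- Paper's Theorem 4.9: if the ones of v (of length n) occur exactly at the
positions j 0 < j 1 < … < j (m-1) (1-indexed positions), and for each k there are
positive integers z k, t k with `3^(k+1) * z k + 2^(j k - 1) = 2^n * t k`, then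
`X* = Σ z k` realizes v as its parity vector of length n and
`T^[n] X* = Σ 3^(m-1-k) * t k`. -/
theorem stmt_12 (n m : ℕ) (hm : 1 ≤ m) (v : List Bool) (hv : v.length = n)
    (j : Fin m → ℕ) (hmono : StrictMono j)
    (hj1 : ∀ k, 1 ≤ j k) (hjn : ∀ k, j k ≤ n)
    (hones : ∀ i : ℕ, i < n → (v.getD i false = true ↔ ∃ k, j k = i + 1))
    (z t : Fin m → ℕ) (hz : ∀ k, 0 < z k) (ht : ∀ k, 0 < t k)
    (heq : ∀ k : Fin m, 3 ^ ((k : ℕ) + 1) * z k + 2 ^ (j k - 1) = 2 ^ n * t k) :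
    parityVec (∑ k, z k) n = v ∧
      collatzT^[n] (∑ k, z k) = ∑ k : Fin m, 3 ^ (m - 1 - (k : ℕ)) * t k :=
  stmt_12_general n m v hv j hmono hj1 hjn hones z t heq
end

section
/- Let V = (e_1, e_2, …) be an infinite binary sequence and, for j ≥ 1, let N_{0,j}(V) be the smallest positive integer whose parity vector of length j equals (e_1, …, e_j). Then there exists a positive integer N such that for every j ≥ 1 the parity vector of length j of N equals (e_1, …, e_j) (i.e., V is realizable as the parity vector of an infinite Collatz sequence) if and only if the real sequence N_{0,j}(V)/2^j tends to 0 as j → ∞. (Paper's Theorem 6.2, equivalently Proposition 2.1.) -/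
lemma two_mul_collatzT (N : ℕ) :
    2 * collatzT N = if N % 2 = 0 then N else 3 * N + 1 := by
  unfold collatzT
  split_ifs <;> omega

lemma modEq_of_parityVec_eq (j : ℕ) :
    ∀ {A B : ℕ}, parityVec A j = parityVec B j → A ≡ B [MOD 2 ^ j] := by
  induction j with
  | zero => intro A B _; exact Nat.modEq_one
  | succ j ih =>
    intro A B h
    rw [parityVec_succ, parityVec_succ] at h
    have hpar : A % 2 = B % 2 := by
      have := List.head_eq_of_cons_eq h
      simp only [decide_eq_decide] at this
      omega
    have hT : 2 * collatzT A ≡ 2 * collatzT B [MOD 2 ^ (j + 1)] := by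
      rw [pow_succ']
      exact (ih (List.tail_eq_of_cons_eq h)).mul_left' 2
    rw [two_mul_collatzT, two_mul_collatzT, ← hpar] at hT
    split_ifs at hT
    · exact hT
    · -- `3` is invertible modulo a power of `2`
      exact Nat.ModEq.cancel_left_of_coprime (Nat.Coprime.pow_left _ (by decide))
        (Nat.ModEq.add_right_cancel' 1 hT)

lemma parityVec_eq_of_le {V : ℕ → Bool} {M j k : ℕ} (hjk : j ≤ k)
    (hM : parityVec M k = (List.range k).map V) :
    parityVec M j = (List.range j).map V := by
  unfold parityVec at *
  rw [List.map_inj_left] at hM ⊢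
  exact fun x hx => hM x (List.mem_range.2 ((List.mem_range.1 hx).trans_le hjk))

/-- `N j` is the paper's `N_{0,j}(V)`. -/
def IsMinimalRealizer (V : ℕ → Bool) (N : ℕ → ℕ) : Prop :=
  ∀ j, 1 ≤ j → IsLeast {M : ℕ | 0 < M ∧ parityVec M j = (List.range j).map V} (N j)

namespace IsMinimalRealizer

variable {V : ℕ → Bool} {N : ℕ → ℕ}

lemma le_succ (hN : IsMinimalRealizer V N) {j : ℕ} (hj : 1 ≤ j) : N j ≤ N (j + 1) :=
  (hN j hj).2 ⟨(hN (j + 1) (by omega)).1.1,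
    parityVec_eq_of_le j.le_succ (hN (j + 1) (by omega)).1.2⟩

lemma succ_eq_of_lt (hN : IsMinimalRealizer V N) {j : ℕ} (hj : 1 ≤ j)
    (hlt : N (j + 1) < 2 ^ j) : N (j + 1) = N j := by
  have hmod : N (j + 1) ≡ N j [MOD 2 ^ j] := modEq_of_parityVec_eq j <|
    (parityVec_eq_of_le j.le_succ (hN (j + 1) (by omega)).1.2).trans (hN j hj).1.2.symm
  exact Nat.ModEq.eq_of_lt_of_lt hmod hlt ((hN.le_succ hj).trans_lt hlt)

lemma eq_of_le (hN : IsMinimalRealizer V N) {K : ℕ} (hK : 1 ≤ K)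
    (hlt : ∀ j, K ≤ j → N (j + 1) < 2 ^ j) {j : ℕ} (hj : K ≤ j) : N j = N K := by
  induction j, hj using Nat.le_induction with
  | base => rfl
  | succ j hKj ih => rw [hN.succ_eq_of_lt (hK.trans hKj) (hlt j hKj), ih]

lemma realizes_of_eventually_lt (hN : IsMinimalRealizer V N) {K : ℕ} (hK : 1 ≤ K)
    (hlt : ∀ j, K ≤ j → N (j + 1) < 2 ^ j) (j : ℕ) :
    parityVec (N K) j = (List.range j).map V := by
  rcases le_total j K with hjK | hKj
  · exact parityVec_eq_of_le hjK (hN K hK).1.2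
  · rw [← hN.eq_of_le hK hlt hKj]
    exact (hN j (hK.trans hKj)).1.2

end IsMinimalRealizer

/-- Paper's Theorem 6.2 (Proposition 2.1): V is realizable as the parity vector of
an infinite Collatz sequence iff `N j / 2^j → 0`, where N j is the smallest
positive integer realizing the length-j truncation of V. -/
theorem stmt_15 (V : ℕ → Bool) (N : ℕ → ℕ)
    (hN : ∀ j, 1 ≤ j →
      IsLeast {M : ℕ | 0 < M ∧ parityVec M j = (List.range j).map V} (N j)) :
    (∃ N₀ : ℕ, 0 < N₀ ∧ ∀ j, 1 ≤ j → parityVec N₀ j = (List.range j).map V) ↔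
      Filter.Tendsto (fun j => (N j : ℝ) / 2 ^ j) Filter.atTop (nhds 0) := by
  replace hN : IsMinimalRealizer V N := hN
  constructor
  · rintro ⟨N₀, hpos, hV⟩
    refine squeeze_zero' (.of_forall fun j => by positivity) ?_
      ((tendsto_const_nhds (x := (N₀ : ℝ))).div_atTop (tendsto_pow_atTop_atTop_of_one_lt one_lt_two))
    filter_upwards [Filter.eventually_ge_atTop 1] with j hj
    gcongr
    exact (hN j hj).2 ⟨hpos, hV j hj⟩
  · intro h
    obtain ⟨J, hJ⟩ := Filter.eventually_atTop.1 (h.eventually_lt_const one_half_pos)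
    have hlt : ∀ j, max J 1 ≤ j → N (j + 1) < 2 ^ j := fun j hj => by
      have := hJ (j + 1) (by omega)
      rw [div_lt_iff₀ (by positivity), pow_succ] at this
      exact_mod_cast (by linarith : (N (j + 1) : ℝ) < 2 ^ j)
    exact ⟨N (max J 1), (hN _ (le_max_right _ _)).1.1,
      fun j _ => hN.realizes_of_eventually_lt (le_max_right _ _) hlt j⟩
end
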